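/- TV coverage guarantee: Let P and P̂ be two transition kernels on the same finite MDP (reward r with 0 ≤ r ≤ R_max, discount γ ∈ (0,1), initial distribution ρ₀), let Π be a nonempty set of stationary policies, and suppose a probability mass function d_data on S × A satisfies κ-coverage for Π under P. Then for every π ∈ Π, |V_π(P) − V_π(P̂)| ≤ (γ·R_max/(1−γ)) · κ · Σ_{(s,a)} d_data(s,a)·TV(P(·|s,a), P̂(·|s,a)). -/

import Mathlib

/-!
The value gap `V - V̂` is itself a value function under `P`, for the reward
`γ · (P - P̂) V̂` (the simulation lemma). Pairing a value function with the discounted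
occupancy `d` of the policy turns `ρ₀ · W` into the `d`-weighted reward, so the gap equals
`γ · ∑ d(s,a) · ((P - P̂)(·|s,a) · V̂)`. Since `V̂` takes values in `[0, R_max/(1-γ)]` (maximum
principle), each term is at most `R_max/(1-γ) · TV`, and coverage bounds `d` by `κ · d_data`.
The occupancy itself exists as the discounted sum of the time-`t` state-action laws.
-/

open Finset Real

/-- `p` is a probability mass function on a finite type. -/
def IsPMF {X : Type*} [Fintype X] (p : X → ℝ) : Prop :=
  (∀ x, 0 ≤ p x) ∧ ∑ x, p x = 1

/-- `P` is a transition kernel: each `P s a` is a pmf on states. -/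
def IsKernel {S A : Type*} [Fintype S] [Fintype A] (P : S → A → S → ℝ) : Prop :=
  ∀ s a, IsPMF (P s a)

/-- `pol` is a stationary policy: each `pol s` is a pmf on actions. -/
def IsPolicy {S A : Type*} [Fintype S] [Fintype A] (pol : S → A → ℝ) : Prop :=
  ∀ s, IsPMF (pol s)

/-- `V` satisfies the Bellman evaluation equation for policy `pol` under kernel `P`,
reward `r` and discount `γ`. -/
def IsValue {S A : Type*} [Fintype S] [Fintype A] (P : S → A → S → ℝ) (pol : S → A → ℝ)
    (r : S → A → ℝ) (γ : ℝ) (V : S → ℝ) : Prop :=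
  ∀ s, V s = ∑ a, pol s a * (r s a + γ * ∑ s', P s a s' * V s')

/-- `d` is the (unnormalized) discounted state-action occupancy of `pol` under kernel `P`
with initial distribution `ρ₀` and discount `γ`. -/
def IsOcc {S A : Type*} [Fintype S] [Fintype A] (P : S → A → S → ℝ) (pol : S → A → ℝ)
    (ρ₀ : S → ℝ) (γ : ℝ) (d : S → A → ℝ) : Prop :=
  ∀ s a, d s a = pol s a * (ρ₀ s + γ * ∑ x : S × A, d x.1 x.2 * P x.1 x.2 s)

/-- ℓ₁ distance between two pmfs on a finite type. -/
noncomputable def l1Dist {X : Type*} [Fintype X] (p q : X → ℝ) : ℝ :=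
  ∑ x, |p x - q x|

/-- Total variation distance between two pmfs on a finite type. -/
noncomputable def tvDist {X : Type*} [Fintype X] (p q : X → ℝ) : ℝ :=
  (1 / 2) * ∑ x, |p x - q x|

/-- Kullback-Leibler divergence between two pmfs on a finite type (finite under
absolute continuity). -/
noncomputable def klF {X : Type*} [Fintype X] (p q : X → ℝ) : ℝ :=
  ∑ x, p x * Real.log (p x / q x)

/-- `d_data` satisfies κ-coverage for the policy set `Pol` under kernel `P`:
every occupancy of a policy in `Pol` is dominated by `κ · d_data`. -/
def KappaCoverage {S A : Type*} [Fintype S] [Fintype A] (P : S → A → S → ℝ) (ρ₀ : S → ℝ)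
    (γ : ℝ) (Pol : Set (S → A → ℝ)) (ddata : S → A → ℝ) (κ : ℝ) : Prop :=
  ∀ pol ∈ Pol, ∀ dpol : S → A → ℝ, IsOcc P pol ρ₀ γ dpol → ∀ s a, dpol s a ≤ κ * ddata s a

/-- Critic discrepancy `Δ_{D,P̂}(s,a)`. -/
noncomputable def critDelta {S A : Type*} [Fintype S] (P Phat : S → A → S → ℝ)
    (D : S → A → S → ℝ) (s : S) (a : A) : ℝ :=
  (∑ s', P s a s' * D s a s') - ∑ s', Phat s a s' * D s a s'

/-- Supremum over the critic class of the critic discrepancy at `(s,a)`. -/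
noncomputable def critSup {S A : Type*} [Fintype S] (𝒟 : Set (S → A → S → ℝ))
    (P Phat : S → A → S → ℝ) (s : S) (a : A) : ℝ :=
  sSup {y | ∃ D ∈ 𝒟, y = critDelta P Phat D s a}

section

variable {X : Type*} [Fintype X]

theorem IsPMF.sum_mul_le {p f : X → ℝ} {M : ℝ} (hp : IsPMF p) (hf : ∀ x, f x ≤ M) :
    ∑ x, p x * f x ≤ M :=
  calc ∑ x, p x * f x ≤ ∑ x, p x * M :=
        sum_le_sum fun x _ => mul_le_mul_of_nonneg_left (hf x) (hp.1 x)
    _ = M := by rw [← sum_mul, hp.2, one_mul]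

theorem abs_sum_sub_mul_le_tvDist {p q f : X → ℝ} {lo hi : ℝ} (hpq : ∑ x, p x = ∑ x, q x)
    (hf : ∀ x, f x ∈ Set.Icc lo hi) :
    |∑ x, (p x - q x) * f x| ≤ (hi - lo) * tvDist p q := by
  -- `p - q` has total mass zero, so `f` may be centred at the midpoint of `[lo, hi]`.
  have hcentre : ∑ x, (p x - q x) * f x = ∑ x, (p x - q x) * (f x - (lo + hi) / 2) := by
    simp only [mul_sub, sum_sub_distrib, ← sum_mul, hpq, sub_self, zero_mul, sub_zero]
  calc |∑ x, (p x - q x) * f x| = |∑ x, (p x - q x) * (f x - (lo + hi) / 2)| := by rw [hcentre]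
    _ ≤ ∑ x, |p x - q x| * |f x - (lo + hi) / 2| :=
        (abs_sum_le_sum_abs _ _).trans_eq (by simp only [abs_mul])
    _ ≤ ∑ x, |p x - q x| * ((hi - lo) / 2) := by
        refine sum_le_sum fun x _ => mul_le_mul_of_nonneg_left ?_ (abs_nonneg _)
        obtain ⟨hlo, hhi⟩ := hf x
        rw [abs_le]
        constructor <;> linarith
    _ = (hi - lo) * tvDist p q := by rw [tvDist, ← sum_mul]; ring

end

section

variable {S A : Type*} [Fintype S] [Fintype A]

/-- The law of the state-action pair at time `t`; the occupancy is `∑ₜ γ ^ t • stepDist t`. -/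
noncomputable def stepDist (P : S → A → S → ℝ) (pol : S → A → ℝ) (ρ₀ : S → ℝ) :
    ℕ → S → A → ℝ
  | 0 => fun s a => pol s a * ρ₀ s
  | t + 1 => fun s a => pol s a * ∑ x : S × A, stepDist P pol ρ₀ t x.1 x.2 * P x.1 x.2 s

variable {P : S → A → S → ℝ} {pol : S → A → ℝ} {ρ₀ : S → ℝ}

theorem stepDist_nonneg (hP : IsKernel P) (hpol : IsPolicy pol) (hρ : IsPMF ρ₀) (t : ℕ)
    (s : S) (a : A) : 0 ≤ stepDist P pol ρ₀ t s a := by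
  induction t generalizing s a with
  | zero => exact mul_nonneg ((hpol s).1 a) (hρ.1 s)
  | succ t ih =>
    exact mul_nonneg ((hpol s).1 a) (sum_nonneg fun x _ => mul_nonneg (ih _ _) ((hP _ _).1 s))

theorem sum_stepDist (hP : IsKernel P) (hpol : IsPolicy pol) (hρ : IsPMF ρ₀) (t : ℕ) :
    ∑ x : S × A, stepDist P pol ρ₀ t x.1 x.2 = 1 := by
  induction t with
  | zero =>
    rw [Fintype.sum_prod_type]
    simp only [stepDist, ← sum_mul, (hpol _).2, one_mul, hρ.2]
  | succ t ih =>
    calc ∑ x : S × A, stepDist P pol ρ₀ (t + 1) x.1 x.2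
        = ∑ s, ∑ y : S × A, stepDist P pol ρ₀ t y.1 y.2 * P y.1 y.2 s := by
          rw [Fintype.sum_prod_type]
          simp only [stepDist, ← sum_mul, (hpol _).2, one_mul]
      _ = ∑ y : S × A, stepDist P pol ρ₀ t y.1 y.2 := by
          rw [sum_comm]
          simp only [← mul_sum, (hP _ _).2, mul_one]
      _ = 1 := ih

theorem stepDist_le_one (hP : IsKernel P) (hpol : IsPolicy pol) (hρ : IsPMF ρ₀) (t : ℕ)
    (s : S) (a : A) : stepDist P pol ρ₀ t s a ≤ 1 :=
  sum_stepDist hP hpol hρ t ▸ single_le_sum (f := fun x : S × A => stepDist P pol ρ₀ t x.1 x.2)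
    (fun x _ => stepDist_nonneg hP hpol hρ t x.1 x.2) (mem_univ (s, a))

theorem summable_pow_mul_stepDist (hP : IsKernel P) (hpol : IsPolicy pol) (hρ : IsPMF ρ₀)
    {γ : ℝ} (hγ0 : 0 ≤ γ) (hγ1 : γ < 1) (s : S) (a : A) :
    Summable fun t => γ ^ t * stepDist P pol ρ₀ t s a :=
  Summable.of_nonneg_of_le
    (fun t => mul_nonneg (pow_nonneg hγ0 t) (stepDist_nonneg hP hpol hρ t s a))
    (fun t => mul_le_of_le_one_right (pow_nonneg hγ0 t) (stepDist_le_one hP hpol hρ t s a))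
    (summable_geometric_of_lt_one hγ0 hγ1)

theorem exists_isOcc_nonneg (hP : IsKernel P) (hpol : IsPolicy pol) (hρ : IsPMF ρ₀) {γ : ℝ}
    (hγ0 : 0 ≤ γ) (hγ1 : γ < 1) : ∃ d, IsOcc P pol ρ₀ γ d ∧ ∀ s a, 0 ≤ d s a := by
  have hsum := summable_pow_mul_stepDist hP hpol hρ hγ0 hγ1
  refine ⟨fun s a => ∑' t, γ ^ t * stepDist P pol ρ₀ t s a, fun s a => ?_,
    fun s a => tsum_nonneg fun t =>
      mul_nonneg (pow_nonneg hγ0 t) (stepDist_nonneg hP hpol hρ t s a)⟩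
  -- Dropping the first term of the series applies one transition step to all of it.
  have hstep : ∀ t, γ ^ (t + 1) * stepDist P pol ρ₀ (t + 1) s a
      = pol s a * γ * ∑ x : S × A, γ ^ t * stepDist P pol ρ₀ t x.1 x.2 * P x.1 x.2 s := by
    intro t
    simp only [stepDist, pow_succ, mul_sum]
    exact sum_congr rfl fun x _ => by ring
  have hshift := (hasSum_sum (s := (univ : Finset (S × A))) fun x _ =>
    (hsum x.1 x.2).hasSum.mul_right (P x.1 x.2 s)).mul_left (pol s a * γ)
  rw [← funext hstep] at hshift
  have hsplit := HasSum.zero_add (f := fun t => γ ^ t * stepDist P pol ρ₀ t s a) hshift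
  simp only [(hsum s a).hasSum.unique hsplit, pow_zero, one_mul, stepDist]
  ring

end

section

variable {S A : Type*} [Fintype S] [Fintype A] {P : S → A → S → ℝ} {pol : S → A → ℝ}
  {g : S → A → ℝ} {γ : ℝ} {W : S → ℝ}

theorem IsValue.neg (hW : IsValue P pol g γ W) : IsValue P pol (-g) γ (-W) := by
  intro s
  rw [Pi.neg_apply, hW s, ← sum_neg_distrib]
  refine sum_congr rfl fun a _ => ?_
  simp only [Pi.neg_apply, mul_neg, sum_neg_distrib]
  ring

theorem IsValue.le_div_one_sub_of_le (hP : IsKernel P) (hpol : IsPolicy pol) (hγ0 : 0 ≤ γ)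
    (hγ1 : γ < 1) (hW : IsValue P pol g γ W) {c : ℝ} (hg : ∀ s a, g s a ≤ c) (s : S) :
    W s ≤ c / (1 - γ) := by
  obtain ⟨s₀, -, hs₀⟩ := exists_max_image univ W ⟨s, mem_univ s⟩
  have hmax : ∀ s', W s' ≤ W s₀ := fun s' => hs₀ s' (mem_univ s')
  have hfix : W s₀ ≤ c + γ * W s₀ :=
    calc W s₀ = ∑ a, pol s₀ a * (g s₀ a + γ * ∑ s', P s₀ a s' * W s') := hW s₀
      _ ≤ c + γ * W s₀ := (hpol s₀).sum_mul_le fun a =>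
          add_le_add (hg s₀ a) (mul_le_mul_of_nonneg_left ((hP s₀ a).sum_mul_le hmax) hγ0)
  rw [le_div_iff₀ (by linarith)]
  nlinarith [hmax s]

theorem IsValue.nonneg (hP : IsKernel P) (hpol : IsPolicy pol) (hγ0 : 0 ≤ γ) (hγ1 : γ < 1)
    (hW : IsValue P pol g γ W) (hg : ∀ s a, 0 ≤ g s a) (s : S) : 0 ≤ W s := by
  have := hW.neg.le_div_one_sub_of_le hP hpol hγ0 hγ1 (c := 0) (fun s a => neg_nonpos.2 (hg s a)) s
  rwa [zero_div, Pi.neg_apply, neg_nonpos] at this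

theorem IsValue.sub {Phat : S → A → S → ℝ} {V Vhat : S → ℝ} (hV : IsValue P pol g γ V)
    (hVhat : IsValue Phat pol g γ Vhat) :
    IsValue P pol (fun s a => γ * ∑ s', (P s a s' - Phat s a s') * Vhat s') γ (V - Vhat) := by
  intro s
  rw [Pi.sub_apply, hV s, hVhat s, ← sum_sub_distrib]
  refine sum_congr rfl fun a _ => ?_
  simp only [Pi.sub_apply, sub_mul, mul_sub, sum_sub_distrib]
  ring

theorem IsOcc.sum_mul_eq {ρ₀ : S → ℝ} {d : S → A → ℝ} (hd : IsOcc P pol ρ₀ γ d)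
    (hW : IsValue P pol g γ W) : ∑ s, ρ₀ s * W s = ∑ x : S × A, d x.1 x.2 * g x.1 x.2 := by
  -- Pair the Bellman equation with `d` and the occupancy equation with `W`.
  have hpair : ∑ x : S × A, d x.1 x.2 * (g x.1 x.2 + γ * ∑ s', P x.1 x.2 s' * W s')
      = ∑ s, (ρ₀ s + γ * ∑ x : S × A, d x.1 x.2 * P x.1 x.2 s) * W s := by
    rw [Fintype.sum_prod_type]
    refine sum_congr rfl fun s _ => ?_
    rw [hW s, mul_sum]
    exact sum_congr rfl fun a _ => by rw [hd s a]; ring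
  have hswap : ∑ s, (γ * ∑ x : S × A, d x.1 x.2 * P x.1 x.2 s) * W s
      = ∑ x : S × A, d x.1 x.2 * (γ * ∑ s', P x.1 x.2 s' * W s') := by
    simp only [mul_sum, sum_mul]
    rw [sum_comm]
    exact sum_congr rfl fun x _ => sum_congr rfl fun s _ => by ring
  simp only [mul_add, add_mul, sum_add_distrib] at hpair
  linarith

end

theorem abs_sum_mul_le_sum_mul {ι : Type*} [Fintype ι] {d w f B : ι → ℝ} (hd : ∀ i, 0 ≤ d i)
    (hdw : ∀ i, d i ≤ w i) (hf : ∀ i, |f i| ≤ B i) : |∑ i, d i * f i| ≤ ∑ i, w i * B i :=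
  (abs_sum_le_sum_abs _ _).trans <| sum_le_sum fun i _ => by
    rw [abs_mul, abs_of_nonneg (hd i)]
    exact mul_le_mul (hdw i) (hf i) (abs_nonneg _) ((hd i).trans (hdw i))

theorem tv_coverage_guarantee_general
    {S A : Type*} [Fintype S] [Fintype A]
    (P Phat : S → A → S → ℝ) (hP : IsKernel P) (hPhat : IsKernel Phat)
    (r : S → A → ℝ) (Rmax : ℝ) (hr : ∀ s a, 0 ≤ r s a ∧ r s a ≤ Rmax)
    (γ : ℝ) (hγ0 : 0 < γ) (hγ1 : γ < 1)
    (ρ₀ : S → ℝ) (hρ : IsPMF ρ₀)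
    (Pol : Set (S → A → ℝ)) (hPol : ∀ p ∈ Pol, IsPolicy p)
    (ddata : S → A → ℝ)
    (κ : ℝ)
    (hcov : KappaCoverage P ρ₀ γ Pol ddata κ) :
    ∀ p ∈ Pol, ∀ V Vhat : S → ℝ, IsValue P p r γ V → IsValue Phat p r γ Vhat →
      |(∑ s, ρ₀ s * V s) - ∑ s, ρ₀ s * Vhat s| ≤
        γ * Rmax / (1 - γ) * κ *
          ∑ x : S × A, ddata x.1 x.2 * tvDist (P x.1 x.2) (Phat x.1 x.2) := by
  intro p hp V Vhat hV hVhat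
  have hpol := hPol p hp
  obtain ⟨d, hd, hd_nonneg⟩ := exists_isOcc_nonneg hP hpol hρ hγ0.le hγ1
  have hVhat_mem : ∀ s, Vhat s ∈ Set.Icc 0 (Rmax / (1 - γ)) := fun s =>
    ⟨hVhat.nonneg hPhat hpol hγ0.le hγ1 (fun s a => (hr s a).1) s,
      hVhat.le_div_one_sub_of_le hPhat hpol hγ0.le hγ1 (fun s a => (hr s a).2) s⟩
  have hgap : (∑ s, ρ₀ s * V s) - ∑ s, ρ₀ s * Vhat s
      = ∑ x : S × A, d x.1 x.2 * (γ * ∑ s', (P x.1 x.2 s' - Phat x.1 x.2 s') * Vhat s') := by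
    rw [← hd.sum_mul_eq (hV.sub hVhat), ← sum_sub_distrib]
    simp only [Pi.sub_apply, mul_sub]
  have herr : ∀ x : S × A, |γ * ∑ s', (P x.1 x.2 s' - Phat x.1 x.2 s') * Vhat s'|
      ≤ γ * ((Rmax / (1 - γ) - 0) * tvDist (P x.1 x.2) (Phat x.1 x.2)) := fun x => by
    rw [abs_mul, abs_of_pos hγ0]
    exact mul_le_mul_of_nonneg_left (abs_sum_sub_mul_le_tvDist
      (by rw [(hP x.1 x.2).2, (hPhat x.1 x.2).2]) hVhat_mem) hγ0.le
  rw [hgap]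
  refine (abs_sum_mul_le_sum_mul (fun x => hd_nonneg x.1 x.2)
    (fun x => hcov p hp d hd x.1 x.2) herr).trans_eq ?_
  rw [mul_sum]
  exact sum_congr rfl fun x _ => by ring

/-- **TV coverage guarantee.** Under κ-coverage, the value gap of every policy in `Pol`
is bounded by the `ddata`-weighted one-step total-variation error. -/
theorem tv_coverage_guarantee
    {S A : Type*} [Fintype S] [Fintype A] [Nonempty S] [Nonempty A]
    (P Phat : S → A → S → ℝ) (hP : IsKernel P) (hPhat : IsKernel Phat)
    (r : S → A → ℝ) (Rmax : ℝ) (hr : ∀ s a, 0 ≤ r s a ∧ r s a ≤ Rmax)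
    (γ : ℝ) (hγ0 : 0 < γ) (hγ1 : γ < 1)
    (ρ₀ : S → ℝ) (hρ : IsPMF ρ₀)
    (Pol : Set (S → A → ℝ)) (hPolNe : Pol.Nonempty) (hPol : ∀ p ∈ Pol, IsPolicy p)
    (ddata : S → A → ℝ) (hdata : IsPMF (fun x : S × A => ddata x.1 x.2))
    (κ : ℝ) (hκ : 0 < κ)
    (hcov : KappaCoverage P ρ₀ γ Pol ddata κ) :
    ∀ p ∈ Pol, ∀ V Vhat : S → ℝ, IsValue P p r γ V → IsValue Phat p r γ Vhat →
      |(∑ s, ρ₀ s * V s) - ∑ s, ρ₀ s * Vhat s| ≤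
        γ * Rmax / (1 - γ) * κ *
          ∑ x : S × A, ddata x.1 x.2 * tvDist (P x.1 x.2) (Phat x.1 x.2) :=
  tv_coverage_guarantee_general P Phat hP hPhat r Rmax hr γ hγ0 hγ1 ρ₀ hρ Pol hPol ddata κ hcov
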